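/- arXiv:2103.11242 — 5 statements merged into one kernel-verified Lean document; each statement's English description precedes it below -/
import Mathlib

section
/- Fix μ ∈ ℝ and let u : ℝ → ℝ³ be a global solution of the differential equation u′(t) = f_μ(u(t)). If u(0) ∈ [0,1]³, then u(t) ∈ [0,1]³ for all t ∈ ℝ; that is, the cube [0,1]³ is flow-invariant for the system ẋ = f_μ(x). -/
open Set Real Filter Asymptotics

private lemma hasDerivAt_maxsq (x : ℝ) :
    HasDerivAt (fun y : ℝ => max y 0 ^ 2) (2 * max x 0) x := by
  rcases lt_trichotomy x 0 with h | h | h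
  · have hev : (fun _ : ℝ => (0 : ℝ)) =ᶠ[nhds x] fun y : ℝ => max y 0 ^ 2 := by
      filter_upwards [eventually_lt_nhds h] with y hy
      simp [max_eq_right hy.le]
    have := (hasDerivAt_const x (0 : ℝ)).congr_of_eventuallyEq hev.symm
    simpa [max_eq_right h.le] using this
  · subst h
    rw [hasDerivAt_iff_isLittleO]
    simp only [max_self, mul_zero, sub_zero, smul_eq_mul, zero_mul]
    have h1 : (fun y : ℝ => max y 0 ^ 2) =O[nhds (0 : ℝ)] fun y => y ^ 2 := by
      apply isBigO_of_le
      intro y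
      have hy : |max y 0| ≤ |y| := by
        rcases le_or_gt y 0 with hy | hy
        · simp [max_eq_right hy]
        · simp [max_eq_left hy.le]
      simpa [abs_pow, sq_abs] using pow_le_pow_left₀ (abs_nonneg _) hy 2
    have h2 : (fun y : ℝ => y ^ 2) =o[nhds (0 : ℝ)] fun y => y := by
      have ho : (fun y : ℝ => y) =o[nhds (0 : ℝ)] fun _ => (1 : ℝ) :=
        (isLittleO_one_iff ℝ).mpr tendsto_id
      have := ho.mul_isBigO (isBigO_refl (fun y : ℝ => y) (nhds 0))
      simpa [sq] using this
    simpa using h1.trans_isLittleO h2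
  · have hev : (fun y : ℝ => y ^ 2) =ᶠ[nhds x] fun y : ℝ => max y 0 ^ 2 := by
      filter_upwards [eventually_gt_nhds h] with y hy
      simp [max_eq_left hy.le]
    have := (hasDerivAt_pow 2 x).congr_of_eventuallyEq hev.symm
    simpa [max_eq_left h.le, mul_comm] using this

/-- Grönwall key lemma: if `w' = c`, `|c| ≤ B |w|` on `[0,T]`, `w 0 ≤ 0`, then `w T ≤ 0`. -/
private lemma key (w c : ℝ → ℝ) (T B : ℝ) (hT : 0 ≤ T) (hB : 0 ≤ B)
    (hw : ∀ t, HasDerivAt w (c t) t)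
    (hc : ∀ t ∈ Icc 0 T, |c t| ≤ B * |w t|)
    (h0 : w 0 ≤ 0) : w T ≤ 0 := by
  set V : ℝ → ℝ := fun t => max (w t) 0 ^ 2 with hV
  have hVd : ∀ t, HasDerivAt V (2 * max (w t) 0 * c t) t := fun t =>
    (hasDerivAt_maxsq (w t)).comp t (hw t)
  have hcont : ContinuousOn V (Icc 0 T) :=
    fun t _ => ((hVd t).continuousAt).continuousWithinAt
  have hbound : ∀ t ∈ Ico 0 T, ‖2 * max (w t) 0 * c t‖ ≤ (2 * B) * ‖V t‖ + 0 := by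
    intro t ht
    have ht' : t ∈ Icc 0 T := Ico_subset_Icc_self ht
    rcases le_or_gt (w t) 0 with hwt | hwt
    · simp only [max_eq_right hwt, mul_zero, zero_mul, norm_zero, add_zero]
      positivity
    · have hm : max (w t) 0 = w t := max_eq_left hwt.le
      have h1 : |c t| ≤ B * |w t| := hc t ht'
      have h2 : |w t| = w t := abs_of_pos hwt
      have hVt : ‖V t‖ = w t ^ 2 := by
        simp [hV, hm, abs_of_nonneg (sq_nonneg (w t))]
      rw [hm, Real.norm_eq_abs, abs_mul, abs_mul, hVt, abs_two, h2]
      rw [h2] at h1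
      nlinarith [hwt.le]
  have hV0 : ‖V 0‖ ≤ 0 := by simp [hV, max_eq_right h0]
  have hgw := norm_le_gronwallBound_of_norm_deriv_right_le hcont
    (fun t _ => (hVd t).hasDerivWithinAt) hV0 hbound T ⟨hT, le_refl T⟩
  rw [gronwallBound_ε0_δ0] at hgw
  have hVT : V T = 0 := le_antisymm (le_trans (le_abs_self _) hgw) (sq_nonneg _)
  by_contra hpos
  push_neg at hpos
  have hm : max (w T) 0 = w T := max_eq_left hpos.le
  rw [hV] at hVT
  simp only [hm] at hVT
  nlinarith

/-- Forward invariance of `[0,1]` for `u' = u(1-u)h`. -/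
private lemma comp_forward (u h : ℝ → ℝ)
    (hu : ∀ t, HasDerivAt u (u t * (1 - u t) * h t) t)
    (hh : Continuous h) (h0 : u 0 ∈ Icc (0 : ℝ) 1) :
    ∀ t, 0 ≤ t → u t ∈ Icc (0 : ℝ) 1 := by
  intro T hT
  have hcu : Continuous u := by
    rw [continuous_iff_continuousAt]; exact fun t => (hu t).continuousAt
  set g : ℝ → ℝ := fun s => |u s * h s| + |(1 - u s) * h s| with hg
  have hcg : Continuous g := by
    apply Continuous.add
    · exact (hcu.mul hh).abs
    · exact (((continuous_const.sub hcu)).mul hh).abs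
  obtain ⟨B, hBle⟩ := isCompact_Icc.exists_bound_of_continuousOn
    (hcg.continuousOn : ContinuousOn g (Icc (0:ℝ) T))
  have hB : 0 ≤ B := le_trans (by positivity) (le_trans (le_abs_self _) (hBle 0 ⟨le_refl 0, hT⟩))
  constructor
  · -- 0 ≤ u T, via w = -u
    have := key (fun t => -u t) (fun t => -(u t * (1 - u t) * h t)) T B hT hB
      (fun t => (hu t).neg)
      (by
        intro t ht
        have hle : g t ≤ B := le_trans (le_abs_self _) (hBle t ht)
        have : |-(u t * (1 - u t) * h t)| = |(1 - u t) * h t| * |-u t| := by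
          rw [abs_neg, abs_neg]
          rw [show u t * (1 - u t) * h t = (1 - u t) * h t * u t by ring, abs_mul]
        rw [this]
        show |(1 - u t) * h t| * |-u t| ≤ B * |-u t|
        apply mul_le_mul_of_nonneg_right _ (abs_nonneg _)
        have : 0 ≤ |u t * h t| := abs_nonneg _
        simp only [hg] at hle
        linarith)
      (by simpa using h0.1)
    simpa using this
  · -- u T ≤ 1, via w = u - 1
    have := key (fun t => u t - 1) (fun t => u t * (1 - u t) * h t) T B hT hB
      (fun t => (hu t).sub_const 1)
      (by
        intro t ht
        have hle : g t ≤ B := le_trans (le_abs_self _) (hBle t ht)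
        have heq : |u t * (1 - u t) * h t| = |u t * h t| * |u t - 1| := by
          rw [show u t * (1 - u t) * h t = u t * h t * (1 - u t) by ring, abs_mul,
            abs_sub_comm (1 : ℝ)]
        rw [heq]
        show |u t * h t| * |u t - 1| ≤ B * |u t - 1|
        apply mul_le_mul_of_nonneg_right _ (abs_nonneg _)
        have : 0 ≤ |(1 - u t) * h t| := abs_nonneg _
        simp only [hg] at hle
        linarith)
      (by show u 0 - 1 ≤ 0; linarith [h0.2])
    have : u T - 1 ≤ 0 := this
    linarith

/-- Full invariance of `[0,1]` for `u' = u(1-u)h`. -/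
private lemma comp_inv (u h : ℝ → ℝ)
    (hu : ∀ t, HasDerivAt u (u t * (1 - u t) * h t) t)
    (hh : Continuous h) (h0 : u 0 ∈ Icc (0 : ℝ) 1) :
    ∀ t, u t ∈ Icc (0 : ℝ) 1 := by
  intro t
  rcases le_or_gt 0 t with ht | ht
  · exact comp_forward u h hu hh h0 t ht
  · have hrev : ∀ s, HasDerivAt (fun s => u (-s))
        (u (-s) * (1 - u (-s)) * (-h (-s))) s := by
      intro s
      have := (hu (-s)).comp s (hasDerivAt_neg s)
      exact this.congr_deriv (by ring)
    have := comp_forward (fun s => u (-s)) (fun s => -h (-s)) hrev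
      (hh.comp continuous_neg).neg (by simpa using h0) (-t) (by linarith)
    simpa using this

/-- for a global solution `u = (u₁, u₂, u₃)` of `u' = f_μ(u)`, where
`f_μ(x,y,z) = (x(1−x)(12−μ+(μ−14)x−20y−4z), y(1−y)(−10+20x+4y−4z), z(1−z)(27−54x+11y−4z))`,
if `u(0) ∈ [0,1]³` then `u(t) ∈ [0,1]³` for all `t`: the cube is flow-invariant. -/
theorem cube_flow_invariant (μ : ℝ) (u₁ u₂ u₃ : ℝ → ℝ)
    (h₁ : ∀ t : ℝ, HasDerivAt u₁
      (u₁ t * (1 - u₁ t) * (12 - μ + (μ - 14) * u₁ t - 20 * u₂ t - 4 * u₃ t)) t)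
    (h₂ : ∀ t : ℝ, HasDerivAt u₂
      (u₂ t * (1 - u₂ t) * (-10 + 20 * u₁ t + 4 * u₂ t - 4 * u₃ t)) t)
    (h₃ : ∀ t : ℝ, HasDerivAt u₃
      (u₃ t * (1 - u₃ t) * (27 - 54 * u₁ t + 11 * u₂ t - 4 * u₃ t)) t)
    (h0 : u₁ 0 ∈ Set.Icc (0 : ℝ) 1 ∧ u₂ 0 ∈ Set.Icc (0 : ℝ) 1 ∧
      u₃ 0 ∈ Set.Icc (0 : ℝ) 1) :
    ∀ t : ℝ, u₁ t ∈ Set.Icc (0 : ℝ) 1 ∧ u₂ t ∈ Set.Icc (0 : ℝ) 1 ∧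
      u₃ t ∈ Set.Icc (0 : ℝ) 1 := by
  have hc₁ : Continuous u₁ := by
    rw [continuous_iff_continuousAt]; exact fun t => (h₁ t).continuousAt
  have hc₂ : Continuous u₂ := by
    rw [continuous_iff_continuousAt]; exact fun t => (h₂ t).continuousAt
  have hc₃ : Continuous u₃ := by
    rw [continuous_iff_continuousAt]; exact fun t => (h₃ t).continuousAt
  intro t
  refine ⟨?_, ?_, ?_⟩
  · exact comp_inv u₁ (fun t => 12 - μ + (μ - 14) * u₁ t - 20 * u₂ t - 4 * u₃ t) h₁
      (by continuity) h0.1 t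
  · exact comp_inv u₂ (fun t => -10 + 20 * u₁ t + 4 * u₂ t - 4 * u₃ t) h₂
      (by continuity) h0.2.1 t
  · exact comp_inv u₃ (fun t => 27 - 54 * u₁ t + 11 * u₂ t - 4 * u₃ t) h₃
      (by continuity) h0.2.2 t
end

section
/- For every μ ∈ [−2938/95, 10], the point B₁(μ) = ((15+μ)/(40+μ), 0, 27(10−μ)/(4(40+μ))) satisfies f_μ(B₁(μ)) = 0, and B₁(μ) ∈ [0,1]³ if and only if μ ≥ 110/31. -/
/-- The polymatrix replicator vector field `f_μ` on `ℝ³ = ℝ × ℝ × ℝ`. -/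
noncomputable def f (μ : ℝ) (p : ℝ × ℝ × ℝ) : ℝ × ℝ × ℝ :=
  (p.1 * (1 - p.1) * (12 - μ + (μ - 14) * p.1 - 20 * p.2.1 - 4 * p.2.2),
   p.2.1 * (1 - p.2.1) * (-10 + 20 * p.1 + 4 * p.2.1 - 4 * p.2.2),
   p.2.2 * (1 - p.2.2) * (27 - 54 * p.1 + 11 * p.2.1 - 4 * p.2.2))

/-- The cube `[0,1]³`. -/
def cube : Set (ℝ × ℝ × ℝ) :=
  {p | p.1 ∈ Set.Icc (0 : ℝ) 1 ∧ p.2.1 ∈ Set.Icc (0 : ℝ) 1 ∧ p.2.2 ∈ Set.Icc (0 : ℝ) 1}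

/-- `B₁(μ) = ((15+μ)/(40+μ), 0, 27(10−μ)/(4(40+μ)))` is an equilibrium of
`f_μ`, and it lies in the cube `[0,1]³` if and only if `μ ≥ 110/31`. -/
theorem B1_equilibrium (μ : ℝ) (hμ : μ ∈ Set.Icc (-2938 / 95 : ℝ) 10) :
    f μ ((15 + μ) / (40 + μ), 0, 27 * (10 - μ) / (4 * (40 + μ))) = (0, 0, 0) ∧
    (((15 + μ) / (40 + μ), (0 : ℝ), 27 * (10 - μ) / (4 * (40 + μ))) ∈ cube ↔
      110 / 31 ≤ μ) := by
  obtain ⟨h1, h2⟩ := hμ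
  have h40 : (0:ℝ) < 40 + μ := by linarith
  have h40' : (40:ℝ) + μ ≠ 0 := ne_of_gt h40
  constructor
  · simp only [f, Prod.mk.injEq]
    refine ⟨?_, by ring, ?_⟩ <;> field_simp <;> ring
  · constructor
    · rintro ⟨_, _, _, hz1⟩
      have : 27 * (10 - μ) ≤ 4 * (40 + μ) := by
        have h4 : (0:ℝ) < 4 * (40 + μ) := by linarith
        exact (div_le_one h4).mp hz1
      linarith
    · intro hμ'
      refine ⟨⟨?_, ?_⟩, ⟨le_refl 0, zero_le_one⟩, ?_, ?_⟩
      · apply div_nonneg <;> linarith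
      · rw [div_le_one h40]; linarith
      · apply div_nonneg <;> linarith
      · rw [div_le_one (by linarith : (0:ℝ) < 4 * (40 + μ))]; linarith
end

section
/- For every μ ∈ [−2938/95, 10], the point B₂(μ) = ((62+μ)/(86+μ), −3(6+μ)/(2(86+μ)), 1) satisfies f_μ(B₂(μ)) = 0, and B₂(μ) ∈ [0,1]³ if and only if μ ≤ −6. -/
/-!
On the face `z = 1` the third component of `f_μ` vanishes identically, and the first two
vanish where the affine factors `8 - μ + (μ - 14)x - 20y` and `-14 + 20x + 4y` do; `B₂(μ)` is
the solution of this linear system. Its `y`-coordinate `-3(6 + μ)/(2(86 + μ))` is nonnegative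
exactly when `μ ≤ -6`, while the other coordinate constraints hold on the whole range.
-/

noncomputable def B2 (μ : ℝ) : ℝ × ℝ × ℝ :=
  ((62 + μ) / (86 + μ), -3 * (6 + μ) / (2 * (86 + μ)), 1)

lemma f_eq_zero_of_face_one {μ x y : ℝ} (hx : 8 - μ + (μ - 14) * x - 20 * y = 0)
    (hy : -14 + 20 * x + 4 * y = 0) : f μ (x, y, 1) = (0, 0, 0) := by
  simp only [f, Prod.mk.injEq]
  refine ⟨?_, ?_, by ring⟩
  · linear_combination x * (1 - x) * hx
  · linear_combination y * (1 - y) * hy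

lemma f_B2_eq_zero {μ : ℝ} (hμ : 86 + μ ≠ 0) : f μ (B2 μ) = (0, 0, 0) := by
  apply f_eq_zero_of_face_one
  · field_simp
    ring
  · field_simp
    ring

lemma B2_mem_cube_iff {μ : ℝ} (hμ : -38 ≤ μ) : B2 μ ∈ cube ↔ μ ≤ -6 := by
  have hden : 0 < 86 + μ := by linarith
  have hden2 : 0 < 2 * (86 + μ) := by linarith
  simp only [B2, cube, Set.mem_ofPred_eq, Set.mem_Icc, div_nonneg_iff, div_le_one hden,
    div_le_one hden2, le_refl, zero_le_one, and_true]
  constructor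
  · rintro ⟨-, ⟨hy, -⟩ | ⟨-, hy⟩, -⟩ <;> linarith
  · intro h
    exact ⟨⟨Or.inl ⟨by linarith, hden.le⟩, by linarith⟩,
      ⟨Or.inl ⟨by linarith, hden2.le⟩, by linarith⟩⟩

/-- `B₂(μ) = ((62+μ)/(86+μ), −3(6+μ)/(2(86+μ)), 1)` is an equilibrium of
`f_μ`, and it lies in the cube `[0,1]³` if and only if `μ ≤ −6`. -/
theorem B2_equilibrium (μ : ℝ) (hμ : μ ∈ Set.Icc (-2938 / 95 : ℝ) 10) :
    f μ ((62 + μ) / (86 + μ), -3 * (6 + μ) / (2 * (86 + μ)), 1) = (0, 0, 0) ∧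
    (((62 + μ) / (86 + μ), -3 * (6 + μ) / (2 * (86 + μ)), (1 : ℝ)) ∈ cube ↔
      μ ≤ -6) :=
  ⟨f_B2_eq_zero (by linarith [hμ.1]), B2_mem_cube_iff (by linarith [hμ.1])⟩
end

section
/- For every μ ∈ [−2938/95, 10], the point B₃(μ) = ((38+μ)/(86+μ), 5(10−μ)/(2(86+μ)), 0) satisfies f_μ(B₃(μ)) = 0, and B₃(μ) ∈ [0,1]³ if and only if μ ≥ −122/7. -/
/-- `B₃(μ) = ((38+μ)/(86+μ), 5(10−μ)/(2(86+μ)), 0)` is an equilibrium of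
`f_μ`, and it lies in the cube `[0,1]³` if and only if `μ ≥ −122/7`. -/
theorem B3_equilibrium (μ : ℝ) (hμ : μ ∈ Set.Icc (-2938 / 95 : ℝ) 10) :
    f μ ((38 + μ) / (86 + μ), 5 * (10 - μ) / (2 * (86 + μ)), 0) = (0, 0, 0) ∧
    (((38 + μ) / (86 + μ), 5 * (10 - μ) / (2 * (86 + μ)), (0 : ℝ)) ∈ cube ↔
      -122 / 7 ≤ μ) := by

  obtain ⟨h1, h2⟩ := hμ
  have hd : (0:ℝ) < 86 + μ := by linarith
  have hd' : (86 + μ) ≠ 0 := ne_of_gt hd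
  constructor
  · simp only [f, Prod.mk.injEq]
    refine ⟨?_, ?_, by ring⟩ <;> · field_simp; ring
  · constructor
    · rintro ⟨hx, hy, -⟩
      have := hy.2
      rw [div_le_one (by linarith)] at this
      linarith
    · intro h
      refine ⟨⟨?_, ?_⟩, ⟨?_, ?_⟩, by norm_num⟩
      · exact div_nonneg (by linarith) hd.le
      · rw [div_le_one hd]; linarith
      · exact div_nonneg (by linarith) (by linarith)
      · rw [div_le_one (by linarith)]; linarith
end

section
/- For every μ with −2938/95 < μ < 10, the point O(μ) = ( (7μ−1042)/(7μ−2014), 37(μ−10)/(7μ−2014), 109(μ−10)/(2(7μ−2014)) ) lies in the open cube (0,1)³, satisfies f_μ(O(μ)) = 0, and is the unique equilibrium in the interior: every p ∈ (0,1)³ with f_μ(p) = 0 equals O(μ). -/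
lemma factor_zero {a B : ℝ} (h0 : 0 < a) (h1 : a < 1) (h : a * (1 - a) * B = 0) :
    B = 0 := by
  have ha : a ≠ 0 := h0.ne'
  have ha1 : (1 : ℝ) - a ≠ 0 := by intro h'; nlinarith
  rcases mul_eq_zero.mp h with h' | h'
  · rcases mul_eq_zero.mp h' with h'' | h'' <;> [exact absurd h'' ha; exact absurd h'' ha1]
  · exact h'

/-- for `−2938/95 < μ < 10`, the point `O(μ)` lies in the open cube
`(0,1)³`, is an equilibrium of `f_μ`, and is the unique equilibrium in the interior. -/
theorem interior_equilibrium (μ : ℝ) (hμ₁ : -2938 / 95 < μ) (hμ₂ : μ < 10) :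
    ((7 * μ - 1042) / (7 * μ - 2014) ∈ Set.Ioo (0 : ℝ) 1 ∧
      37 * (μ - 10) / (7 * μ - 2014) ∈ Set.Ioo (0 : ℝ) 1 ∧
      109 * (μ - 10) / (2 * (7 * μ - 2014)) ∈ Set.Ioo (0 : ℝ) 1) ∧
    f μ ((7 * μ - 1042) / (7 * μ - 2014), 37 * (μ - 10) / (7 * μ - 2014),
      109 * (μ - 10) / (2 * (7 * μ - 2014))) = (0, 0, 0) ∧
    ∀ p : ℝ × ℝ × ℝ,
      p.1 ∈ Set.Ioo (0 : ℝ) 1 → p.2.1 ∈ Set.Ioo (0 : ℝ) 1 → p.2.2 ∈ Set.Ioo (0 : ℝ) 1 →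
      f μ p = (0, 0, 0) →
      p = ((7 * μ - 1042) / (7 * μ - 2014), 37 * (μ - 10) / (7 * μ - 2014),
        109 * (μ - 10) / (2 * (7 * μ - 2014))) := by
  have hd : 7 * μ - 2014 < 0 := by linarith
  have hd' : 7 * μ - 2014 ≠ 0 := ne_of_lt hd
  have hd2 : 2 * (7 * μ - 2014) ≠ 0 := by positivity
  refine ⟨⟨⟨?_, ?_⟩, ⟨?_, ?_⟩, ⟨?_, ?_⟩⟩, ?_, ?_⟩
  · exact div_pos_of_neg_of_neg (by linarith) hd
  · rw [← neg_div_neg_eq]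
    exact (div_lt_one (by linarith)).mpr (by linarith)
  · exact div_pos_of_neg_of_neg (by linarith) hd
  · rw [← neg_div_neg_eq]
    exact (div_lt_one (by linarith)).mpr (by linarith)
  · exact div_pos_of_neg_of_neg (by linarith) (by linarith)
  · rw [← neg_div_neg_eq]
    exact (div_lt_one (by linarith)).mpr (by linarith)
  · simp only [f, Prod.mk.injEq]
    refine ⟨?_, ?_, ?_⟩
    · have h : 12 - μ + (μ - 14) * ((7 * μ - 1042) / (7 * μ - 2014)) -
        20 * (37 * (μ - 10) / (7 * μ - 2014)) -
        4 * (109 * (μ - 10) / (2 * (7 * μ - 2014))) = 0 := by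
        field_simp [mul_comm 7 μ ▸ hd']
        ring
      rw [h, mul_zero]
    · have h : -10 + 20 * ((7 * μ - 1042) / (7 * μ - 2014)) +
        4 * (37 * (μ - 10) / (7 * μ - 2014)) -
        4 * (109 * (μ - 10) / (2 * (7 * μ - 2014))) = 0 := by
        field_simp [mul_comm 7 μ ▸ hd']
        ring
      rw [h, mul_zero]
    · have h : 27 - 54 * ((7 * μ - 1042) / (7 * μ - 2014)) +
        11 * (37 * (μ - 10) / (7 * μ - 2014)) -
        4 * (109 * (μ - 10) / (2 * (7 * μ - 2014))) = 0 := by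
        field_simp [mul_comm 7 μ ▸ hd']
        ring
      rw [h, mul_zero]
  · rintro ⟨x, y, z⟩ ⟨hx0, hx1⟩ ⟨hy0, hy1⟩ ⟨hz0, hz1⟩ hfp
    simp only [f, Prod.mk.injEq] at hfp ⊢
    obtain ⟨e1, e2, e3⟩ := hfp
    have h1 := factor_zero hx0 hx1 e1
    have h2 := factor_zero hy0 hy1 e2
    have h3 := factor_zero hz0 hz1 e3
    have hx : (7 * μ - 2014) * x = 7 * μ - 1042 := by
      linear_combination 7 * h1 - 31 * h2 + 24 * h3
    have hy : (7 * μ - 2014) * y = 37 * (μ - 10) := by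
      linear_combination ((2014 - 7 * μ) / 7) * (h2 - h3) + (74 / 7) * hx
    have hz : (2 * (7 * μ - 2014)) * z = 109 * (μ - 10) := by
      linear_combination (-(7 * μ - 2014) / 2) * h2 + 10 * hx + 2 * hy
    refine ⟨?_, ?_, ?_⟩
    · rw [eq_div_iff hd']; linarith [hx]
    · rw [eq_div_iff hd']; linarith [hy]
    · rw [eq_div_iff hd2]; linarith [hz]
end
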